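/- arXiv:1408.5971 — 4 statements merged into one kernel-verified Lean document; each statement's English description precedes it below -/
import Mathlib

section
/- Let f : X × Y → Z be a function on finite sets and define the symbol-wise function f_n(x,y) = (f(x_1,y_1),...,f(x_n,y_n)). If f is a Han–Kobayashi function (i.e., (i) for all a1 ≠ a2 in X the functions f(a1,·) and f(a2,·) are distinct, (ii) for all b1 ≠ b2 in Y the functions f(·,b1) and f(·,b2) are distinct, and (iii) f(a1,b1) ≠ f(a2,b2) whenever a1 ≠ a2 and b1 ≠ b2) and additionally for all x ∈ X, f(x,y) = f(x,ŷ) implies y = ŷ, then f_n is jointly sensitive for all n, i.e., f_n(x,y) ≠ f_n(x̂,ŷ) whenever x ≠ x̂ and y ≠ ŷ. -/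
/-- If `f` is a Han–Kobayashi function and additionally
`f(x,y) = f(x,y')` implies `y = y'`, then the symbol-wise extension `f_n`
is jointly sensitive for all `n`. -/
theorem stmt_0 {X Y Z : Type*} [Fintype X] [Fintype Y] [Fintype Z]
    (f : X → Y → Z)
    (hHK1 : ∀ a1 a2 : X, a1 ≠ a2 → ∃ b : Y, f a1 b ≠ f a2 b)
    (hHK2 : ∀ b1 b2 : Y, b1 ≠ b2 → ∃ a : X, f a b1 ≠ f a b2)
    (hHK3 : ∀ (a1 a2 : X) (b1 b2 : Y), a1 ≠ a2 → b1 ≠ b2 → f a1 b1 ≠ f a2 b2)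
    (hInj : ∀ (x : X) (y y' : Y), f x y = f x y' → y = y') :
    ∀ (n : ℕ) (x x' : Fin n → X) (y y' : Fin n → Y), x ≠ x' → y ≠ y' →
      (fun i => f (x i) (y i)) ≠ (fun i => f (x' i) (y' i)) := by
  intro n x x' y y' hx hy heq
  obtain ⟨j, hj⟩ := Function.ne_iff.mp hy
  have hj' := congrFun heq j
  by_cases hxj : x j = x' j
  · exact hj (hInj (x j) (y j) (y' j) (hxj ▸ hj'))
  · exact hHK3 (x j) (x' j) (y j) (y' j) hxj hj hj'
end

section
/- Let f : X × Y → Z be a function on finite sets and f_n the symbol-wise function defined by f. If for some n ≥ 2 the function f_n is jointly sensitive (f_n(x,y) ≠ f_n(x̂,ŷ) whenever x ≠ x̂ and y ≠ ŷ), then at least one of the following holds: (1) for all x ∈ X, f(x,y) = f(x,ŷ) implies y = ŷ; or (2) for all y ∈ Y, f(x,y) = f(x̂,y) implies x = x̂. -/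
/-- If for some `n ≥ 2` the symbol-wise function `f_n` is jointly
sensitive, then `f` is injective in `y` for each fixed `x`, or injective in `x`
for each fixed `y`. -/
theorem stmt_1 {X Y Z : Type*} [Fintype X] [Fintype Y] [Fintype Z]
    (f : X → Y → Z) (n : ℕ) (hn : 2 ≤ n)
    (hjs : ∀ (x x' : Fin n → X) (y y' : Fin n → Y), x ≠ x' → y ≠ y' →
      (fun i => f (x i) (y i)) ≠ (fun i => f (x' i) (y' i))) :
    (∀ (x : X) (y y' : Y), f x y = f x y' → y = y') ∨
    (∀ (y : Y) (x x' : X), f x y = f x' y → x = x') := by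
  by_contra h
  push_neg at h
  obtain ⟨⟨a0, b1, b2, hfb, hb⟩, ⟨b0, a1, a2, hfa, ha⟩⟩ := h
  set i0 : Fin n := ⟨0, by omega⟩ with hi0
  set i1 : Fin n := ⟨1, by omega⟩ with hi1
  have h01 : i1 ≠ i0 := by
    simp [hi0, hi1, Fin.ext_iff]
  set x : Fin n → X := fun i => if i = i0 then a0 else a1 with hx
  set x' : Fin n → X := fun i => if i = i0 then a0 else a2 with hx'
  set y : Fin n → Y := fun i => if i = i0 then b1 else b0 with hy
  set y' : Fin n → Y := fun i => if i = i0 then b2 else b0 with hy'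
  refine hjs x x' y y' ?_ ?_ ?_
  · intro hc
    apply ha
    have := congrFun hc i1
    simpa [hx, hx', h01] using this
  · intro hc
    apply hb
    have := congrFun hc i0
    simpa [hy, hy'] using this
  · funext i
    by_cases hi : i = i0 <;> simp [hx, hx', hy, hy', hi, hfb, hfa]
end

section
/- Let (X,Y) be an i.i.d. source with per-symbol joint distribution P_XY on finite alphabets. Then (X,Y) is weakly smooth with respect to Y if and only if for every a1 ≠ a2 in X, the number of elements b ∈ Y with P_XY(a1,b)·P_XY(a2,b) > 0 is different from one. -/
/-- An i.i.d. source is weakly smooth with respect to `Y` if and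
only if for every `a1 ≠ a2` in `X`, the number of `b ∈ Y` with
`P(a1,b)·P(a2,b) > 0` is different from one. -/
theorem stmt_7 {X Y : Type*} [Fintype X] [Fintype Y] [DecidableEq X] [DecidableEq Y]
    (p : X → Y → ℝ) (hp0 : ∀ a b, 0 ≤ p a b) (hpsum : ∑ a, ∑ b, p a b = 1) :
    (∃ q : ℝ, 0 < q ∧ q < 1 ∧
      ∀ (n : ℕ) (x x' : Fin n → X) (y : Fin n → Y), x ≠ x' →
        0 < (∏ i, p (x i) (y i)) * ∏ i, p (x' i) (y i) →
        ∀ i : Fin n, x i ≠ x' i →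
          ∃ y' : Fin n → Y, y' i ≠ y i ∧ (∀ j, j ≠ i → y' j = y j) ∧
            q * ∏ l, p (x l) (y l) ≤ ∏ l, p (x l) (y' l) ∧
            q * ∏ l, p (x' l) (y l) ≤ ∏ l, p (x' l) (y' l))
    ↔ (∀ a1 a2 : X, a1 ≠ a2 →
        (Finset.univ.filter (fun b : Y => 0 < p a1 b * p a2 b)).card ≠ 1) := by
  have posmul : ∀ {u v : ℝ}, 0 ≤ u → 0 ≤ v → 0 < u * v → 0 < u ∧ 0 < v := by
    intro u v hu hv h
    constructor <;> nlinarith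
  constructor
  · rintro ⟨q, hq0, hq1, hq⟩ a1 a2 hne hcard
    rw [Finset.card_eq_one] at hcard
    obtain ⟨b, hb⟩ := hcard
    have hbmem : b ∈ Finset.univ.filter (fun b : Y => 0 < p a1 b * p a2 b) := by
      rw [hb]; exact Finset.mem_singleton_self b
    rw [Finset.mem_filter] at hbmem
    have hpos := hbmem.2
    obtain ⟨ha1, ha2⟩ := posmul (hp0 a1 b) (hp0 a2 b) hpos
    obtain ⟨y', hy'ne, -, h1, h2⟩ := hq 1 (fun _ => a1) (fun _ => a2) (fun _ => b)
      (fun h => hne (congrFun h 0))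
      (by simpa using hpos) 0 hne
    simp only [Fin.prod_univ_one] at h1 h2
    have hy'1 : 0 < p a1 (y' 0) := lt_of_lt_of_le (by positivity) h1
    have hy'2 : 0 < p a2 (y' 0) := lt_of_lt_of_le (by positivity) h2
    have : y' 0 ∈ Finset.univ.filter (fun b : Y => 0 < p a1 b * p a2 b) := by
      rw [Finset.mem_filter]
      exact ⟨Finset.mem_univ _, mul_pos hy'1 hy'2⟩
    rw [hb, Finset.mem_singleton] at this
    exact hy'ne this
  · intro hcard
    -- set of positive values of p
    set T : Finset ℝ :=
      (Finset.univ.image fun ab : X × Y => p ab.1 ab.2).filter (fun v => 0 < v) with hT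
    have hex : ∃ a b, 0 < p a b := by
      by_contra h
      push_neg at h
      have hz : ∑ a, ∑ b, p a b = 0 :=
        Finset.sum_eq_zero fun a _ => Finset.sum_eq_zero fun b _ =>
          le_antisymm (h a b) (hp0 a b)
      rw [hz] at hpsum
      norm_num at hpsum
    have hmemT : ∀ a b, 0 < p a b → p a b ∈ T := by
      intro a b h
      rw [hT, Finset.mem_filter, Finset.mem_image]
      exact ⟨⟨(a, b), Finset.mem_univ _, rfl⟩, h⟩
    have hTne : T.Nonempty := by
      obtain ⟨a, b, hab⟩ := hex
      exact ⟨p a b, hmemT a b hab⟩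
    set m : ℝ := T.min' hTne with hm
    set M : ℝ := T.max' hTne with hM
    have hmpos : 0 < m := (Finset.mem_filter.mp (T.min'_mem hTne)).2
    have hmM : m ≤ M := T.min'_le M (T.max'_mem hTne)
    have hMpos : 0 < M := lt_of_lt_of_le hmpos hmM
    refine ⟨m / (2 * M), by positivity, ?_, ?_⟩
    · rw [div_lt_one (by positivity)]
      linarith
    · intro n x x' y hxx' hpos i hi
      obtain ⟨hA, hB⟩ := posmul (Finset.prod_nonneg fun l _ => hp0 _ _)
        (Finset.prod_nonneg fun l _ => hp0 _ _) hpos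
      have hfx : ∀ l, 0 < p (x l) (y l) := by
        intro l
        rcases (hp0 (x l) (y l)).lt_or_eq with h | h
        · exact h
        · exact absurd (Finset.prod_eq_zero (Finset.mem_univ l) h.symm) hA.ne'
      have hfx' : ∀ l, 0 < p (x' l) (y l) := by
        intro l
        rcases (hp0 (x' l) (y l)).lt_or_eq with h | h
        · exact h
        · exact absurd (Finset.prod_eq_zero (Finset.mem_univ l) h.symm) hB.ne'
      -- the set of common positive symbols at position i
      set F : Finset Y := Finset.univ.filter (fun b : Y => 0 < p (x i) b * p (x' i) b)
        with hF
      have hyiF : y i ∈ F := by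
        rw [hF, Finset.mem_filter]
        exact ⟨Finset.mem_univ _, mul_pos (hfx i) (hfx' i)⟩
      have hFcard : 1 < F.card := by
        have h1 : 0 < F.card := Finset.card_pos.mpr ⟨y i, hyiF⟩
        have h2 : F.card ≠ 1 := hcard (x i) (x' i) hi
        omega
      obtain ⟨b', hb'F, hb'ne⟩ := Finset.exists_mem_ne hFcard (y i)
      rw [hF, Finset.mem_filter] at hb'F
      obtain ⟨hb'1, hb'2⟩ := posmul (hp0 (x i) b') (hp0 (x' i) b') hb'F.2
      -- the key single-letter inequality
      have hqM : m / (2 * M) * (2 * M) = m := div_mul_cancel₀ m (by positivity)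
      have key : ∀ a b b', 0 < p a b → 0 < p a b' → m / (2 * M) * p a b ≤ p a b' := by
        intro a b b' hab hab'
        have h1 : p a b ≤ M := T.le_max' _ (hmemT a b hab)
        have h2 : m ≤ p a b' := T.min'_le _ (hmemT a b' hab')
        have h3 : m / (2 * M) * p a b ≤ m / (2 * M) * M :=
          mul_le_mul_of_nonneg_left h1 (by positivity)
        nlinarith
      have hsplit : ∀ (z : Fin n → X),
          ∏ l, p (z l) (Function.update y i b' l)
            = p (z i) b' * ∏ l ∈ Finset.univ.erase i, p (z l) (y l) := by
        intro z
        rw [← Finset.mul_prod_erase Finset.univ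
          (fun l => p (z l) (Function.update y i b' l)) (Finset.mem_univ i)]
        congr 1
        · rw [Function.update_self]
        · exact Finset.prod_congr rfl fun j hj => by
            rw [Function.update_of_ne (Finset.ne_of_mem_erase hj)]
      have hsplit' : ∀ (z : Fin n → X),
          ∏ l, p (z l) (y l)
            = p (z i) (y i) * ∏ l ∈ Finset.univ.erase i, p (z l) (y l) :=
        fun z => (Finset.mul_prod_erase Finset.univ
          (fun l => p (z l) (y l)) (Finset.mem_univ i)).symm
      refine ⟨Function.update y i b', by simp [hb'ne], fun j hj => Function.update_of_ne hj _ _, ?_, ?_⟩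
      · rw [hsplit, hsplit', ← mul_assoc]
        exact mul_le_mul_of_nonneg_right (key (x i) (y i) b' (hfx i) hb'1)
          (Finset.prod_nonneg fun l _ => hp0 _ _)
      · rw [hsplit, hsplit', ← mul_assoc]
        exact mul_le_mul_of_nonneg_right (key (x' i) (y i) b' (hfx' i) hb'2)
          (Finset.prod_nonneg fun l _ => hp0 _ _)
end

section
/- Let f : X × Y → Z. If f fails condition (1) 'for all x, f(x,y)=f(x,ŷ) ⟹ y=ŷ' and fails condition (2) 'for all y, f(x,y)=f(x̂,y) ⟹ x=x̂', then there exist x², x̂² ∈ X² and y², ŷ² ∈ Y² with x² ≠ x̂², y² ≠ ŷ², and f_2(x²,y²) = f_2(x̂²,ŷ²), where f_2 is the symbol-wise extension of f to length 2; hence f_2 is not jointly sensitive. -/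
/-- If `f` fails both single-letter injectivity conditions, then
the symbol-wise extension `f_2` is not jointly sensitive: there are witnesses
`x² ≠ x'²`, `y² ≠ y'²` with `f_2(x²,y²) = f_2(x'²,y'²)`. -/
theorem stmt_18 {X Y Z : Type*} (f : X → Y → Z)
    (h1 : ¬ ∀ (x : X) (y y' : Y), f x y = f x y' → y = y')
    (h2 : ¬ ∀ (y : Y) (x x' : X), f x y = f x' y → x = x') :
    ∃ (x x' : Fin 2 → X) (y y' : Fin 2 → Y), x ≠ x' ∧ y ≠ y' ∧
      (fun i => f (x i) (y i)) = (fun i => f (x' i) (y' i)) := by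
  push_neg at h1 h2
  obtain ⟨a0, b1, b2, hfb, hbne⟩ := h1
  obtain ⟨b0, a1, a2, hfa, hane⟩ := h2
  refine ⟨![a0, a1], ![a0, a2], ![b1, b0], ![b2, b0], ?_, ?_, ?_⟩
  · intro h
    exact hane (by simpa using congrFun h 1)
  · intro h
    exact hbne (by simpa using congrFun h 0)
  · funext i
    fin_cases i <;> simpa
end
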